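/- For every set Σ of FAIs in Y and all A, B ∈ L^Y: ||A ⇒ B||^S_Σ = ⋁{c ∈ L : Σ ⊨^S A ⇒ c ⊗ B} = S(B, [A]^S_Σ). -/

import Mathlib

/-- A complete residuated lattice: a complete lattice with a commutative, associative
multiplication whose neutral element is the top element and which distributes over
arbitrary suprema. -/
class CompleteResiduatedLattice (L : Type*) extends CompleteLattice L, CommMonoid L where
  mul_sSup : ∀ (a : L) (s : Set L), a * sSup s = ⨆ b ∈ s, a * b
  one_eq_top : (1 : L) = ⊤

namespace FAIparam

variable {L : Type*} {Y : Type*} {X : Type*}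

/-- A fuzzy attribute implication (FAI): a pair (antecedent, consequent) of L-sets in Y. -/
abbrev FAI (L Y : Type*) := (Y → L) × (Y → L)

/-- A pair of operators on L-sets in Y. -/
abbrev OpPair (L Y : Type*) := ((Y → L) → (Y → L)) × ((Y → L) → (Y → L))

/-- S is a parameterization: every pair in S is a monotone Galois connection, the identity
pair belongs to S, and S is closed under composition ⟨f₁,g₁⟩∘⟨f₂,g₂⟩ = ⟨f₁∘f₂, g₂∘g₁⟩. -/
def IsParam [CompleteResiduatedLattice L] (S : Set (OpPair L Y)) : Prop :=
  (∀ p ∈ S, ∀ A B : Y → L, p.1 A ≤ B ↔ A ≤ p.2 B) ∧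
  (((id, id) : OpPair L Y) ∈ S) ∧
  (∀ p ∈ S, ∀ q ∈ S, ((p.1 ∘ q.1, q.2 ∘ p.2) : OpPair L Y) ∈ S)

/-- M ⊨^S A ⇒ B : for every ⟨f,g⟩ ∈ S, f(A) ⊆ M implies f(B) ⊆ M. -/
def Sat [CompleteResiduatedLattice L] (S : Set (OpPair L Y)) (M : Y → L) (φ : FAI L Y) : Prop :=
  ∀ p ∈ S, p.1 φ.1 ≤ M → p.1 φ.2 ≤ M

/-- The set Mod^S(Th) of S-models of a theory Th. -/
def ModS [CompleteResiduatedLattice L] (S : Set (OpPair L Y)) (Th : Set (FAI L Y)) :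
    Set (Y → L) :=
  {M | ∀ φ ∈ Th, Sat S M φ}

/-- Semantic entailment Th ⊨^S φ, i.e. Mod^S(Th) ⊆ Mod^S({φ}). -/
def Entails [CompleteResiduatedLattice L] (S : Set (OpPair L Y)) (Th : Set (FAI L Y))
    (φ : FAI L Y) : Prop :=
  ModS S Th ⊆ ModS S {φ}

/-- [A]^S_Th : the least S-model of Th containing A (intersection of all such models). -/
def clS [CompleteResiduatedLattice L] (S : Set (OpPair L Y)) (Th : Set (FAI L Y))
    (A : Y → L) : Y → L :=
  sInf {M | M ∈ ModS S Th ∧ A ≤ M}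

/-- S-closure operator on L^Y. -/
def IsSClosureOp [CompleteResiduatedLattice L] (S : Set (OpPair L Y))
    (c : (Y → L) → (Y → L)) : Prop :=
  (∀ A, A ≤ c A) ∧ (∀ A B, A ≤ B → c A ≤ c B) ∧
  (∀ p ∈ S, ∀ A, c (p.2 (c A)) ≤ p.2 (c A))

/-- S-closure system in ⟨L^Y, ⊆⟩. -/
def IsSClosureSys [CompleteResiduatedLattice L] (S : Set (OpPair L Y))
    (𝒮 : Set (Y → L)) : Prop :=
  (∀ T ⊆ 𝒮, sInf T ∈ 𝒮) ∧ (∀ p ∈ S, ∀ M ∈ 𝒮, p.2 M ∈ 𝒮)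

/-- c_𝒮(A) = ⋂{B ∈ 𝒮 : A ⊆ B}. -/
def clSys [CompleteResiduatedLattice L] (𝒮 : Set (Y → L)) (A : Y → L) : Y → L :=
  sInf {B | B ∈ 𝒮 ∧ A ≤ B}

/-- I ⊨^S A ⇒ B for an L-context ⟨X,Y,I⟩ (with I curried, I x = I_x). -/
def CtxSat [CompleteResiduatedLattice L] (S : Set (OpPair L Y)) (I : X → Y → L)
    (φ : FAI L Y) : Prop :=
  ∀ x, Sat S (I x) φ

/-- S_g : the set of upper adjoints occurring in S. -/
def Sg [CompleteResiduatedLattice L] (S : Set (OpPair L Y)) : Set ((Y → L) → (Y → L)) :=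
  {g | ∃ f, (f, g) ∈ S}

/-- F^↑ = ⋂{g(I_x) : ⟨x,g⟩ ∈ F}. -/
def upOp [CompleteResiduatedLattice L] (I : X → Y → L)
    (F : Set (X × ((Y → L) → (Y → L)))) : Y → L :=
  ⨅ xg ∈ F, xg.2 (I xg.1)

/-- G^↓ = {⟨x,g⟩ ∈ X × S_g : G ⊆ g(I_x)}. -/
def downOp [CompleteResiduatedLattice L] (S : Set (OpPair L Y)) (I : X → Y → L)
    (G : Y → L) : Set (X × ((Y → L) → (Y → L))) :=
  {xg | xg.2 ∈ Sg S ∧ G ≤ xg.2 (I xg.1)}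

/-- G^{↓↑} = ⋂{g(I_x) : x ∈ X, ⟨f,g⟩ ∈ S, G ⊆ g(I_x)}. -/
def dnup [CompleteResiduatedLattice L] (S : Set (OpPair L Y)) (I : X → Y → L)
    (G : Y → L) : Y → L :=
  upOp I (downOp S I G)

/-- Σ is S-complete in ⟨X,Y,I⟩. -/
def SComplete [CompleteResiduatedLattice L] (S : Set (OpPair L Y)) (Th : Set (FAI L Y))
    (I : X → Y → L) : Prop :=
  ∀ A B : Y → L, Entails S Th (A, B) ↔ CtxSat S I (A, B)

/-- Σ is an S-base of ⟨X,Y,I⟩. -/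
def SBase [CompleteResiduatedLattice L] (S : Set (OpPair L Y)) (Th : Set (FAI L Y))
    (I : X → Y → L) : Prop :=
  SComplete S Th I ∧ ∀ Th' ⊂ Th, ¬ SComplete S Th' I

/-- S-provability: axioms A∪B ⇒ A, assumptions from Th, rule (Cut) and rule (F). -/
inductive ProvS [CompleteResiduatedLattice L] (S : Set (OpPair L Y)) (Th : Set (FAI L Y)) :
    FAI L Y → Prop
  | ax (A B : Y → L) : ProvS S Th (A ⊔ B, A)
  | hyp {φ : FAI L Y} (h : φ ∈ Th) : ProvS S Th φ
  | cut {A B C D : Y → L} : ProvS S Th (A, B) → ProvS S Th (B ⊔ C, D) → ProvS S Th (A ⊔ C, D)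
  | mul {A B : Y → L} {p : OpPair L Y} (hp : p ∈ S) : ProvS S Th (A, B) → ProvS S Th (p.1 A, p.1 B)

/-- Provability using the axioms and (Cut) as the only inference rule. -/
inductive ProvCut [CompleteResiduatedLattice L] (Th : Set (FAI L Y)) : FAI L Y → Prop
  | ax (A B : Y → L) : ProvCut Th (A ⊔ B, A)
  | hyp {φ : FAI L Y} (h : φ ∈ Th) : ProvCut Th φ
  | cut {A B C D : Y → L} : ProvCut Th (A, B) → ProvCut Th (B ⊔ C, D) → ProvCut Th (A ⊔ C, D)

/-- Residuum a → b = ⋁{c : a ⊗ c ≤ b}. -/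
def resid [CompleteResiduatedLattice L] (a b : L) : L := sSup {c | a * c ≤ b}

/-- Subsethood degree S(A,B) = ⋀_{y∈Y} (A(y) → B(y)). -/
def subDeg [CompleteResiduatedLattice L] (A B : Y → L) : L := ⨅ y, resid (A y) (B y)

/-- c ⊗ B, pointwise. -/
def scMul [CompleteResiduatedLattice L] (c : L) (B : Y → L) : Y → L := fun y => c * B y

/-- ||A ⇒ B||^S_M = ⋁{c ∈ L : M ⊨^S A ⇒ c ⊗ B}. -/
def truthDeg [CompleteResiduatedLattice L] (S : Set (OpPair L Y)) (M A B : Y → L) : L :=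
  sSup {c | Sat S M (A, scMul c B)}

/-- ||A ⇒ B||^S_Th = ⋀_{M ∈ Mod^S(Th)} ||A ⇒ B||^S_M. -/
def entDeg [CompleteResiduatedLattice L] (S : Set (OpPair L Y)) (Th : Set (FAI L Y))
    (A B : Y → L) : L :=
  ⨅ M ∈ ModS S Th, truthDeg S M A B

/-- Immediate consequence operator t^S_Th. -/
def tOp [CompleteResiduatedLattice L] (S : Set (OpPair L Y)) (Th : Set (FAI L Y))
    (M : Y → L) : Y → L :=
  M ⊔ sSup {N | ∃ φ ∈ Th, ∃ p ∈ S, p.1 φ.1 ≤ M ∧ N = p.1 φ.2}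

/-- S-pseudo-intents, defined by well-founded recursion on ⊊ (L^Y is finite). -/
noncomputable def IsPseudoIntent [CompleteResiduatedLattice L] [Finite L] [Finite Y]
    (dn : (Y → L) → (Y → L)) : (Y → L) → Prop :=
  (wellFounded_lt (α := Y → L)).fix
    (fun P rec => P < dn P ∧ ∀ Q, ∀ h : Q < P, rec Q h → dn Q ≤ P)

/-!
The S-models of Σ are closed under intersections and under every upper adjoint g with
⟨f, g⟩ ∈ S. Hence M ⊨^S A ⇒ D says that D ⊆ g(M) whenever A ⊆ g(M), and Σ ⊨^S A ⇒ D says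
that D ⊆ [A]^S_Σ. Since c ⊗ B ⊆ N iff c ≤ S(B, N) by adjointness of ⊗ and →, for every c the
three conditions c ≤ ||A ⇒ B||^S_Σ, Σ ⊨^S A ⇒ c ⊗ B and c ≤ S(B, [A]^S_Σ) are equivalent,
which gives both equalities.
-/

section ResiduatedLattice

variable [CompleteResiduatedLattice L]

theorem mul_left_monotone (c : L) : Monotone (c * ·) := by
  intro a b hab
  show c * a ≤ c * b
  have hb : c * b = c * sSup {a, b} := by rw [sSup_pair, sup_eq_right.mpr hab]
  rw [hb, CompleteResiduatedLattice.mul_sSup]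
  exact le_iSup₂ (f := fun x (_ : x ∈ ({a, b} : Set L)) => c * x) a (Set.mem_insert a {b})

theorem le_resid_iff {a b c : L} : c ≤ resid a b ↔ a * c ≤ b := by
  refine ⟨fun h => ?_, fun h => le_sSup h⟩
  calc a * c ≤ a * resid a b := mul_left_monotone a h
    _ = ⨆ d ∈ {d | a * d ≤ b}, a * d := CompleteResiduatedLattice.mul_sSup _ _
    _ ≤ b := iSup₂_le fun _ hd => hd

theorem le_subDeg_iff {B N : Y → L} {c : L} : c ≤ subDeg B N ↔ scMul c B ≤ N := by
  simp only [subDeg, le_iInf_iff, le_resid_iff, Pi.le_def, scMul, mul_comm]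

end ResiduatedLattice

section Models

variable [CompleteResiduatedLattice L] {S : Set (OpPair L Y)} {Th : Set (FAI L Y)}

theorem IsParam.galoisConnection (hS : IsParam S) {p : OpPair L Y} (hp : p ∈ S) :
    GaloisConnection p.1 p.2 :=
  hS.1 p hp

theorem sat_iff_forall_le_snd (hS : IsParam S) {M A D : Y → L} :
    Sat S M (A, D) ↔ ∀ p ∈ S, A ≤ p.2 M → D ≤ p.2 M := by
  refine forall₂_congr fun p hp => ?_
  simp only [(hS.galoisConnection hp).le_iff_le]

theorem sInf_mem_modS {T : Set (Y → L)} (hT : T ⊆ ModS S Th) : sInf T ∈ ModS S Th :=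
  fun φ hφ p hp hle => le_sInf fun _ hM => hT hM φ hφ p hp (hle.trans (sInf_le hM))

-- `p.1 ∘ q.1` is the lower adjoint of the composite pair, which lies in S.
theorem snd_mem_modS (hS : IsParam S) {p : OpPair L Y} (hp : p ∈ S) {M : Y → L}
    (hM : M ∈ ModS S Th) : p.2 M ∈ ModS S Th := by
  intro φ hφ q hq hle
  have hpq := hS.2.2 p hp q hq
  rw [← (hS.galoisConnection hp).le_iff_le] at hle ⊢
  exact hM φ hφ _ hpq hle

theorem clS_mem_modS {A : Y → L} : clS S Th A ∈ ModS S Th :=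
  sInf_mem_modS fun _ hM => hM.1

theorem le_clS {A : Y → L} : A ≤ clS S Th A :=
  le_sInf fun _ hM => hM.2

theorem clS_le {A M : Y → L} (hM : M ∈ ModS S Th) (hAM : A ≤ M) : clS S Th A ≤ M :=
  sInf_le ⟨hM, hAM⟩

theorem entails_iff_forall_sat {φ : FAI L Y} :
    Entails S Th φ ↔ ∀ M ∈ ModS S Th, Sat S M φ := by
  simp only [Entails, ModS, Set.subset_def, Set.mem_ofPred_eq, Set.mem_singleton_iff,
    forall_eq]

theorem entails_iff_le_clS (hS : IsParam S) {A D : Y → L} :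
    Entails S Th (A, D) ↔ D ≤ clS S Th A := by
  refine ⟨fun h => ?_, fun h => ?_⟩
  · simpa using entails_iff_forall_sat.mp h _ clS_mem_modS (id, id) hS.2.1 le_clS
  · refine entails_iff_forall_sat.mpr fun M hM => (sat_iff_forall_le_snd hS).mpr ?_
    exact fun p hp hA => h.trans (clS_le (snd_mem_modS hS hp hM) hA)

end Models

section Degrees

variable [CompleteResiduatedLattice L] {S : Set (OpPair L Y)} {Th : Set (FAI L Y)}

theorem sat_scMul_iff (hS : IsParam S) {M A B : Y → L} {c : L} :
    Sat S M (A, scMul c B) ↔ c ≤ ⨅ p ∈ S, ⨅ _ : A ≤ p.2 M, subDeg B (p.2 M) := by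
  simp only [sat_iff_forall_le_snd hS, le_iInf_iff, le_subDeg_iff]

theorem le_truthDeg_iff (hS : IsParam S) {M A B : Y → L} {c : L} :
    c ≤ truthDeg S M A B ↔ Sat S M (A, scMul c B) := by
  have hset : {c | Sat S M (A, scMul c B)} = Set.Iic (⨅ p ∈ S, ⨅ _ : A ≤ p.2 M,
      subDeg B (p.2 M)) := Set.ext fun _ => sat_scMul_iff hS
  rw [truthDeg, hset, csSup_Iic, sat_scMul_iff hS]

theorem le_entDeg_iff (hS : IsParam S) {A B : Y → L} {c : L} :
    c ≤ entDeg S Th A B ↔ Entails S Th (A, scMul c B) := by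
  simp only [entDeg, le_iInf_iff, le_truthDeg_iff hS, entails_iff_forall_sat]

theorem entails_scMul_iff (hS : IsParam S) {A B : Y → L} {c : L} :
    Entails S Th (A, scMul c B) ↔ c ≤ subDeg B (clS S Th A) :=
  (entails_iff_le_clS hS).trans le_subDeg_iff.symm

end Degrees

theorem entDeg_eq_sSup_eq_subDeg_general
    {L Y : Type*} [CompleteResiduatedLattice L]
    (S : Set (OpPair L Y)) (hS : IsParam S)
    (Th : Set (FAI L Y)) (A B : Y → L) :
    entDeg S Th A B = sSup {c : L | Entails S Th (A, scMul c B)} ∧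
    entDeg S Th A B = subDeg B (clS S Th A) := by
  have hset : {c : L | Entails S Th (A, scMul c B)} = Set.Iic (entDeg S Th A B) :=
    Set.ext fun _ => (le_entDeg_iff hS).symm
  refine ⟨by rw [hset, csSup_Iic], eq_of_forall_le_iff fun c => ?_⟩
  exact (le_entDeg_iff hS).trans (entails_scMul_iff hS)

/-- the degree of semantic entailment equals the supremum of degrees c
with Σ ⊨^S A ⇒ c ⊗ B, and equals the subsethood degree of B in the least model [A]^S_Σ. -/
theorem entDeg_eq_sSup_eq_subDeg
    {L Y : Type*} [CompleteResiduatedLattice L] [Nonempty Y]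
    (S : Set (OpPair L Y)) (hS : IsParam S)
    (Th : Set (FAI L Y)) (A B : Y → L) :
    entDeg S Th A B = sSup {c : L | Entails S Th (A, scMul c B)} ∧
    entDeg S Th A B = subDeg B (clS S Th A) :=
  entDeg_eq_sSup_eq_subDeg_general S hS Th A B

end FAIparam
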